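/- arXiv:1803.03113 — 2 statements merged into one kernel-verified Lean document; each statement's English description precedes it below -/
import Mathlib

section
/- With φ(x) = k/x^9 for x ∈ (1,∞) and φ(x) = k otherwise (k > 0), and g(x) = Σ_{m=0}^∞ 19683^{−m} φ(3^{−m}x): for every α > 0 there is no function N : ℝ \ {0} → ℝ satisfying both the reciprocal-nonic relation N(3x) = 19683·N(x) for all x and the bound |g(x) − N(x)| ≤ α·|x|^{−9} for all x ∈ ℝ \ {0}. Concretely, if |g(x)| ≤ (α+1)|x|^{−9} held for all x > 1, choosing a positive integer m with m·k > α+1 and x ∈ (1, 3^{m−1}) gives g(x) ≥ m·k/x^9 > (α+1)x^{−9}, a contradiction. -/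
/-!
The series `g` is bounded, so along the orbit `3ⁿ` a solution `N` of `N (3x) = 19683 N x` within
`α |x|⁻⁹` of `g` is a bounded geometric sequence of ratio `19683`, hence zero there; so
`g (3ᵐ) ≤ α 3⁻⁹ᵐ`. But each of the first `m` terms of the series at `x = 3ᵐ` equals exactly
`k / x⁹`, so `g (3ᵐ) ≥ m k / x⁹`, which is larger once `m k > α`.
-/

noncomputable def cappedInvPow (k : ℝ) (p : ℕ) (x : ℝ) : ℝ := if 1 < x then k / x ^ p else k

section cappedInvPow

variable {k : ℝ} {p : ℕ}

lemma cappedInvPow_of_one_lt {x : ℝ} (hx : 1 < x) : cappedInvPow k p x = k / x ^ p :=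
  if_pos hx

lemma cappedInvPow_nonneg (hk : 0 ≤ k) (x : ℝ) : 0 ≤ cappedInvPow k p x := by
  unfold cappedInvPow
  split_ifs <;> positivity

lemma cappedInvPow_le (hk : 0 ≤ k) (x : ℝ) : cappedInvPow k p x ≤ k := by
  unfold cappedInvPow
  split_ifs with hx
  · exact div_le_self hk (one_le_pow₀ hx.le)
  · exact le_rfl

end cappedInvPow

section geometric

variable {r k : ℝ} {f : ℕ → ℝ}

lemma summable_geometric_mul_of_bounded (hr0 : 0 ≤ r) (hr1 : r < 1) (hf0 : ∀ n, 0 ≤ f n)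
    (hfk : ∀ n, f n ≤ k) : Summable fun n ↦ r ^ n * f n :=
  ((summable_geometric_of_lt_one hr0 hr1).mul_right k).of_nonneg_of_le
    (fun n ↦ mul_nonneg (pow_nonneg hr0 n) (hf0 n))
    (fun n ↦ mul_le_mul_of_nonneg_left (hfk n) (pow_nonneg hr0 n))

lemma tsum_geometric_mul_le_of_bounded (hr0 : 0 ≤ r) (hr1 : r < 1) (hf0 : ∀ n, 0 ≤ f n)
    (hfk : ∀ n, f n ≤ k) : ∑' n, r ^ n * f n ≤ (1 - r)⁻¹ * k := by
  rw [← tsum_geometric_of_lt_one hr0 hr1, ← tsum_mul_right]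
  exact (summable_geometric_mul_of_bounded hr0 hr1 hf0 hfk).tsum_le_tsum
    (fun n ↦ mul_le_mul_of_nonneg_left (hfk n) (pow_nonneg hr0 n))
    ((summable_geometric_of_lt_one hr0 hr1).mul_right k)

end geometric

lemma eq_zero_of_abs_le_of_succ_eq_mul {u : ℕ → ℝ} {a M : ℝ} (ha : 1 < a)
    (hu : ∀ n, u (n + 1) = a * u n) (hM : ∀ n, |u n| ≤ M) (n : ℕ) : u n = 0 := by
  have hpow : ∀ n, u n = a ^ n * u 0 := by
    intro n
    induction n with
    | zero => simp
    | succ n ih => rw [hu, ih, pow_succ']; ring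
  suffices hu0 : u 0 = 0 by rw [hpow, hu0, mul_zero]
  by_contra hu0
  have hpos : 0 < |u 0| := abs_pos.mpr hu0
  obtain ⟨n, hn⟩ := pow_unbounded_of_one_lt (M / |u 0|) ha
  have := hM n
  rw [hpow, abs_mul, abs_of_pos (pow_pos (zero_lt_one.trans ha) n)] at this
  rw [div_lt_iff₀ hpos] at hn
  linarith

noncomputable def dilationSeries (k b : ℝ) (p : ℕ) (x : ℝ) : ℝ :=
  ∑' n, ((b ^ p)⁻¹) ^ n * cappedInvPow k p (x / b ^ n)

section dilationSeries

variable {k b : ℝ} {p : ℕ}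

lemma inv_pow_pow_mul_div_div_pow (hb : b ≠ 0) (x : ℝ) (n : ℕ) :
    ((b ^ p)⁻¹) ^ n * (k / (x / b ^ n) ^ p) = k / x ^ p := by
  rw [div_pow, ← pow_mul, mul_comm n p, pow_mul, inv_pow]
  rcases eq_or_ne x 0 with rfl | hx
  · rcases p.eq_zero_or_pos with rfl | hp <;> simp [*, Nat.pos_iff_ne_zero.mp]
  · field_simp

variable (hk : 0 ≤ k) (hb : 1 < b)
include hk hb

lemma dilationSeries_term_nonneg (x : ℝ) (n : ℕ) :
    0 ≤ ((b ^ p)⁻¹) ^ n * cappedInvPow k p (x / b ^ n) :=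
  mul_nonneg (pow_nonneg (inv_nonneg.mpr (pow_nonneg (zero_le_one.trans hb.le) p)) n)
    (cappedInvPow_nonneg hk _)

lemma dilationSeries_nonneg (x : ℝ) : 0 ≤ dilationSeries k b p x :=
  tsum_nonneg (dilationSeries_term_nonneg hk hb x)

variable (hp : p ≠ 0)
include hp

lemma summable_dilationSeries (x : ℝ) :
    Summable fun n ↦ ((b ^ p)⁻¹) ^ n * cappedInvPow k p (x / b ^ n) :=
  summable_geometric_mul_of_bounded (by positivity) (inv_lt_one_of_one_lt₀ (one_lt_pow₀ hb hp))
    (fun _ ↦ cappedInvPow_nonneg hk _) (fun _ ↦ cappedInvPow_le hk _)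

lemma dilationSeries_le (x : ℝ) : dilationSeries k b p x ≤ (1 - (b ^ p)⁻¹)⁻¹ * k :=
  tsum_geometric_mul_le_of_bounded (by positivity) (inv_lt_one_of_one_lt₀ (one_lt_pow₀ hb hp))
    (fun _ ↦ cappedInvPow_nonneg hk _) (fun _ ↦ cappedInvPow_le hk _)

lemma natCast_mul_div_pow_le_dilationSeries {x : ℝ} {m : ℕ} (hx : b ^ m ≤ x) :
    m * k / x ^ p ≤ dilationSeries k b p x := by
  have hterm : ∀ n ∈ Finset.range m,
      k / x ^ p = ((b ^ p)⁻¹) ^ n * cappedInvPow k p (x / b ^ n) := by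
    intro n hn
    have hlt : 1 < x / b ^ n :=
      (one_lt_div (by positivity)).mpr
        ((pow_lt_pow_right₀ hb (Finset.mem_range.mp hn)).trans_le hx)
    rw [cappedInvPow_of_one_lt hlt, inv_pow_pow_mul_div_div_pow (zero_lt_one.trans hb).ne']
  calc (m : ℝ) * k / x ^ p = ∑ n ∈ Finset.range m, k / x ^ p := by
        rw [Finset.sum_const, Finset.card_range, nsmul_eq_mul, mul_div_assoc]
    _ = ∑ n ∈ Finset.range m, ((b ^ p)⁻¹) ^ n * cappedInvPow k p (x / b ^ n) :=
        Finset.sum_congr rfl hterm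
    _ ≤ dilationSeries k b p x :=
        (summable_dilationSeries hk hb hp x).sum_le_tsum _
          fun n _ ↦ dilationSeries_term_nonneg hk hb x n

end dilationSeries

theorem nonic_counterexample_nonstability
    (k : ℝ) (hk : 0 < k) (φ g : ℝ → ℝ)
    (hφ : ∀ x : ℝ, φ x = if 1 < x then k / x ^ 9 else k)
    (hg : ∀ x : ℝ, g x = ∑' m : ℕ, (1 / 19683 : ℝ) ^ m * φ (x / 3 ^ m)) :
    ∀ α > (0 : ℝ),
      ¬ ∃ N : ℝ → ℝ,
        (∀ x : ℝ, x ≠ 0 → N (3 * x) = 19683 * N x) ∧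
        (∀ x : ℝ, x ≠ 0 → |g x - N x| ≤ α * |x| ^ (-9 : ℤ)) := by
  rintro α hα ⟨N, hN, hgN⟩
  obtain rfl : φ = cappedInvPow k 9 := funext hφ
  obtain rfl : g = dilationSeries k 3 9 := funext fun x ↦ by rw [hg, dilationSeries]; norm_num
  have h3 : (1 : ℝ) < 3 := by norm_num
  have hN_orbit : ∀ n : ℕ, N (3 ^ n) = 0 := by
    refine eq_zero_of_abs_le_of_succ_eq_mul (a := 19683) (M := (1 - ((3 : ℝ) ^ 9)⁻¹)⁻¹ * k + α)
      (by norm_num) (fun n ↦ by rw [pow_succ', hN _ (by positivity)]) fun n ↦ ?_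
    have hy : (1 : ℝ) ≤ 3 ^ n := one_le_pow₀ h3.le
    have hdecay : α * |(3 : ℝ) ^ n| ^ (-9 : ℤ) ≤ α :=
      mul_le_of_le_one_right hα.le (zpow_le_one_of_nonpos₀ (hy.trans (le_abs_self _)) (by norm_num))
    have hclose := hgN (3 ^ n) (by positivity)
    have hg_nonneg := dilationSeries_nonneg hk.le h3 (p := 9) (3 ^ n)
    have hg_le := dilationSeries_le hk.le h3 (p := 9) (by norm_num) (3 ^ n)
    rw [abs_le] at hclose ⊢
    constructor <;> linarith
  obtain ⟨m, hm⟩ := exists_nat_gt (α / k)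
  set x : ℝ := 3 ^ m
  have hx : 0 < x := by positivity
  have hupper : dilationSeries k 3 9 x ≤ α * (x ^ 9)⁻¹ := by
    have := hgN x hx.ne'
    rwa [hN_orbit m, sub_zero, abs_of_nonneg (dilationSeries_nonneg hk.le h3 x), abs_of_pos hx,
      zpow_neg, zpow_ofNat] at this
  have hlower := natCast_mul_div_pow_le_dilationSeries hk.le h3 (p := 9) (by norm_num) (le_refl x)
  have : α * (x ^ 9)⁻¹ < m * k / x ^ 9 :=
    div_lt_div_of_pos_right ((div_lt_iff₀ hk).mp hm) (by positivity)
  linarith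
end

section
/- Let x > 3^{m−1} for a positive integer m, and let ψ(t) = c/t^{10} for t > 1, ψ(t) = c otherwise (c > 0), h(x) = Σ_{n=0}^∞ 59049^{−n} ψ(3^{−n}x). Then h(x) ≥ m·c/x^{10}. Consequently, for any β > 0, the bound |h(x)| ≤ (β+1)·x^{−10} fails for all sufficiently large x once m·c > β+1. -/
/-!
For `x > 3 ^ (m - 1)` the first `m` arguments `x / 3 ^ n` all exceed `1`, where the profile is
`c / t ^ 10`; the weight `59049⁻ⁿ = (3 ^ 10)⁻ⁿ` exactly cancels the dilation, so each of these
terms equals `c / x ^ 10`. All other terms are nonnegative, so `h x ≥ m * c / x ^ 10`, which beats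
`(β + 1) / x ^ 10` as soon as `m * c > β + 1`.
-/

noncomputable def powerTailProfile (c : ℝ) (k : ℕ) (t : ℝ) : ℝ :=
  if 1 < t then c / t ^ k else c

section powerTailProfile

variable {c : ℝ} {k : ℕ}

lemma powerTailProfile_of_one_lt {t : ℝ} (ht : 1 < t) : powerTailProfile c k t = c / t ^ k :=
  if_pos ht

lemma powerTailProfile_nonneg (hc : 0 ≤ c) (t : ℝ) : 0 ≤ powerTailProfile c k t := by
  unfold powerTailProfile
  split_ifs with ht
  · exact div_nonneg hc (pow_nonneg (zero_le_one.trans ht.le) k)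
  · exact hc

lemma powerTailProfile_le (hc : 0 ≤ c) (t : ℝ) : powerTailProfile c k t ≤ c := by
  unfold powerTailProfile
  split_ifs with ht
  · exact div_le_self hc (one_le_pow₀ ht.le)
  · exact le_rfl

lemma pow_inv_pow_mul_powerTailProfile_div {b x : ℝ} (hb : 0 < b) {n : ℕ} (hx : b ^ n < x) :
    (b ^ k)⁻¹ ^ n * powerTailProfile c k (x / b ^ n) = c / x ^ k := by
  have hbn : 0 < b ^ n := pow_pos hb n
  rw [powerTailProfile_of_one_lt ((one_lt_div hbn).mpr hx), div_pow, ← pow_mul, mul_comm n k,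
    pow_mul, inv_pow]
  field_simp

end powerTailProfile

lemma summable_pow_mul_of_nonneg_of_le {r c : ℝ} {f : ℕ → ℝ} (hr₀ : 0 ≤ r) (hr₁ : r < 1)
    (hf₀ : ∀ n, 0 ≤ f n) (hfc : ∀ n, f n ≤ c) : Summable fun n ↦ r ^ n * f n :=
  (summable_geometric_of_lt_one hr₀ hr₁).mul_right c |>.of_nonneg_of_le
    (fun n ↦ mul_nonneg (pow_nonneg hr₀ n) (hf₀ n))
    (fun n ↦ mul_le_mul_of_nonneg_left (hfc n) (pow_nonneg hr₀ n))

theorem mul_div_pow_le_tsum_pow_inv_pow_mul_powerTailProfile {b c x : ℝ} {k m : ℕ} (hb : 1 < b)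
    (hk : k ≠ 0) (hc : 0 ≤ c) (hx : b ^ (m - 1) < x) :
    m * c / x ^ k ≤ ∑' n : ℕ, (b ^ k)⁻¹ ^ n * powerTailProfile c k (x / b ^ n) := by
  have hbk : 1 < b ^ k := one_lt_pow₀ hb hk
  have hr₀ : 0 ≤ (b ^ k)⁻¹ := inv_nonneg.mpr (zero_le_one.trans hbk.le)
  have hsummable := summable_pow_mul_of_nonneg_of_le hr₀ (inv_lt_one_of_one_lt₀ hbk) (fun n ↦ powerTailProfile_nonneg (k := k) hc (x / b ^ n))
    (fun n ↦ powerTailProfile_le hc _)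
  have head : ∑ n ∈ Finset.range m, (b ^ k)⁻¹ ^ n * powerTailProfile c k (x / b ^ n)
      = m * c / x ^ k := by
    rw [Finset.sum_congr rfl fun n hn ↦ pow_inv_pow_mul_powerTailProfile_div (zero_lt_one.trans hb)
        ((pow_le_pow_right₀ hb.le (Nat.le_sub_one_of_lt (Finset.mem_range.mp hn))).trans_lt hx),
      Finset.sum_const, Finset.card_range, nsmul_eq_mul, mul_div_assoc]
  rw [← head]
  exact hsummable.sum_le_tsum _ fun n _ ↦
    mul_nonneg (pow_nonneg hr₀ n) (powerTailProfile_nonneg hc _)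

theorem decic_counterexample_lower_bound_general
    (m : ℕ) (c : ℝ) (hc : 0 < c) (ψ h : ℝ → ℝ)
    (hψ : ∀ t : ℝ, ψ t = if 1 < t then c / t ^ 10 else c)
    (hh : ∀ x : ℝ, h x = ∑' n : ℕ, (1 / 59049 : ℝ) ^ n * ψ (x / 3 ^ n)) :
    ∀ x : ℝ, x > 3 ^ (m - 1) →
      h x ≥ m * c / x ^ 10 ∧
      ∀ β > (0 : ℝ), (m : ℝ) * c > β + 1 → ¬ (|h x| ≤ (β + 1) / x ^ 10) := by
  intro x hx
  have hx₀ : 0 < x := (pow_pos three_pos _).trans hx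
  have hge : h x ≥ m * c / x ^ 10 := by
    have hweight : (1 / 59049 : ℝ) = ((3 : ℝ) ^ 10)⁻¹ := by norm_num
    rw [hh, funext hψ, hweight]
    exact mul_div_pow_le_tsum_pow_inv_pow_mul_powerTailProfile (by norm_num) (by norm_num) hc.le hx
  refine ⟨hge, fun β _ hmc habs ↦ ?_⟩
  have hlt : (β + 1) / x ^ 10 < m * c / x ^ 10 := by gcongr
  linarith [le_abs_self (h x)]

theorem decic_counterexample_lower_bound
    (m : ℕ) (hm : 0 < m) (c : ℝ) (hc : 0 < c) (ψ h : ℝ → ℝ)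
    (hψ : ∀ t : ℝ, ψ t = if 1 < t then c / t ^ 10 else c)
    (hh : ∀ x : ℝ, h x = ∑' n : ℕ, (1 / 59049 : ℝ) ^ n * ψ (x / 3 ^ n)) :
    ∀ x : ℝ, x > 3 ^ (m - 1) →
      h x ≥ m * c / x ^ 10 ∧
      ∀ β > (0 : ℝ), (m : ℝ) * c > β + 1 → ¬ (|h x| ≤ (β + 1) / x ^ 10) :=
  decic_counterexample_lower_bound_general m c hc ψ h hψ hh
end
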